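/- Let v₀ ≤ δε² and define v_j = γ²·(16/ℓ²) + (1−γ)²·(16α²/ℓ²) + (1−γ)² v_{j−1} with γ = α and ℓ = 4√(2α/δ)/ε, for α, δ, ε ∈ (0,1). Then v_j ≤ δε² for all j. -/

import Mathlib

/-- DeltaShift++ variance recursion: if `v₀ ≤ δε²` and
`v_{j+1} = γ² (16/ℓ²) + (1−γ)² (16α²/ℓ²) + (1−γ)² v_j` with `γ = α` and
`ℓ = 4 √(2α/δ)/ε`, for `α, δ, ε ∈ (0,1)`, then `v_j ≤ δε²` for all `j`. -/
theorem deltashiftpp_variance_recursion (α δ ε γ ℓ : ℝ) (v : ℕ → ℝ)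
    (hα : α ∈ Set.Ioo (0:ℝ) 1) (hδ : δ ∈ Set.Ioo (0:ℝ) 1) (hε : ε ∈ Set.Ioo (0:ℝ) 1)
    (hγ : γ = α) (hℓ : ℓ = 4 * Real.sqrt (2 * α / δ) / ε)
    (hv0 : v 0 ≤ δ * ε ^ 2)
    (hrec : ∀ j : ℕ, v (j + 1)
      = γ ^ 2 * (16 / ℓ ^ 2) + (1 - γ) ^ 2 * (16 * α ^ 2 / ℓ ^ 2) + (1 - γ) ^ 2 * v j) :
    ∀ j : ℕ, v j ≤ δ * ε ^ 2 := by
  obtain ⟨hα0, hα1⟩ := hα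
  obtain ⟨hδ0, hδ1⟩ := hδ
  obtain ⟨hε0, hε1⟩ := hε
  have hsq : Real.sqrt (2 * α / δ) ^ 2 = 2 * α / δ := by
    rw [Real.sq_sqrt]
    positivity
  have hℓ2 : ℓ ^ 2 = 32 * α / (δ * ε ^ 2) := by
    rw [hℓ]
    rw [div_pow, mul_pow, hsq]
    field_simp
    ring
  have hℓ2pos : ℓ ^ 2 > 0 := by rw [hℓ2]; positivity
  have hkey : 16 / ℓ ^ 2 = δ * ε ^ 2 / (2 * α) := by
    rw [hℓ2]
    field_simp
    ring
  intro j
  induction j with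
  | zero => exact hv0
  | succ n ih =>
    rw [hrec n, hγ, hkey]
    have h1 : (1 - α) ^ 2 * v n ≤ (1 - α) ^ 2 * (δ * ε ^ 2) := by
      apply mul_le_mul_of_nonneg_left ih (by positivity)
    have h2 : α ^ 2 * (δ * ε ^ 2 / (2 * α)) = α / 2 * (δ * ε ^ 2) := by
      field_simp
    have h3 : (1 - α) ^ 2 * (16 * α ^ 2 / ℓ ^ 2) = (1 - α) ^ 2 * α ^ 2 * (δ * ε ^ 2 / (2 * α)) := by
      rw [show (16:ℝ) * α ^ 2 / ℓ ^ 2 = α ^ 2 * (16 / ℓ ^ 2) by ring, hkey]; ring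
    rw [h2, h3]
    have h4 : (1 - α) ^ 2 * α ^ 2 * (δ * ε ^ 2 / (2 * α)) = (1 - α) ^ 2 * (α / 2) * (δ * ε ^ 2) := by
      field_simp
    rw [h4]
    have hde : 0 < δ * ε ^ 2 := by positivity
    nlinarith [sq_nonneg (1 - α), sq_nonneg α, mul_pos hα0 hde, sq_nonneg ((1-α)*α)]
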